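/- arXiv:1807.06125 — 6 statements merged into one kernel-verified Lean document; each statement's English description precedes it below -/
import Mathlib

section
/- Strict monotonicity: if (v,ρ) ∈ GP and (v',ρ') ∈ GP, and at least one of (v',ρ) and (v,ρ') is NOT a ground pair, then ⟨v − v', ρ − ρ'⟩ < 0. -/
/-!
A ground pair has finite energy `F ρ`, so all four excess energies involved are real numbers,
and expanding them gives the identity
`Γ(v', ρ) + Γ(v, ρ') = Γ(v, ρ) + Γ(v', ρ') - ⟨v - v', ρ - ρ'⟩`.
The cross excesses on the left are nonnegative by the definition of `E` as an infimum,
and one of them is nonzero, while both excesses of the ground pairs vanish.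
-/

/-- Excess energy `Γ(v,ρ) := F(ρ) + ⟨v,ρ⟩ − E(v)`. -/
noncomputable def Gam {B : Type*} [NormedAddCommGroup B] [NormedSpace ℝ B]
    (F : B → EReal) (E : (B →L[ℝ] ℝ) → ℝ) (v : B →L[ℝ] ℝ) (ρ : B) : EReal :=
  F ρ + (v ρ : EReal) - (E v : EReal)

section

variable {B : Type*} [NormedAddCommGroup B] [NormedSpace ℝ B]
  {F : B → EReal} {E : (B →L[ℝ] ℝ) → ℝ} {v : B →L[ℝ] ℝ} {ρ : B} {r : ℝ}

lemma Gam_eq_coe (hr : F ρ = r) : Gam F E v ρ = ((r + v ρ - E v : ℝ) : EReal) := by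
  rw [Gam, hr, ← EReal.coe_add, ← EReal.coe_sub]

lemma exists_eq_coe_of_Gam_eq_zero (h : Gam F E v ρ = 0) : ∃ r : ℝ, F ρ = r := by
  induction hF : F ρ using EReal.rec with
  | bot => rw [Gam, hF, EReal.bot_add, EReal.bot_sub] at h; exact absurd h EReal.bot_ne_zero
  | top => rw [Gam, hF, EReal.top_add_coe, EReal.top_sub_coe] at h; exact absurd h EReal.top_ne_zero
  | coe r => exact ⟨r, rfl⟩

lemma le_add_of_iInf_eq (hE : (⨅ σ : B, F σ + (v σ : EReal)) = (E v : EReal))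
    (hr : F ρ = r) : E v ≤ r + v ρ := by
  have : (E v : EReal) ≤ F ρ + (v ρ : EReal) := hE ▸ iInf_le _ ρ
  rw [hr, ← EReal.coe_add] at this
  exact_mod_cast this

end

theorem strict_monotonicity_general
    {B : Type*} [NormedAddCommGroup B] [NormedSpace ℝ B]
    (F : B → EReal)
    (E : (B →L[ℝ] ℝ) → ℝ)
    (hE : ∀ v : B →L[ℝ] ℝ, (⨅ σ : B, F σ + (v σ : EReal)) = (E v : EReal))
    (v v' : B →L[ℝ] ℝ) (ρ ρ' : B)
    (hGP : Gam F E v ρ = 0) (hGP' : Gam F E v' ρ' = 0)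
    (hnot : Gam F E v' ρ ≠ 0 ∨ Gam F E v ρ' ≠ 0) :
    (v - v') (ρ - ρ') < 0 := by
  obtain ⟨r, hr⟩ := exists_eq_coe_of_Gam_eq_zero hGP
  obtain ⟨r', hr'⟩ := exists_eq_coe_of_Gam_eq_zero hGP'
  rw [Gam_eq_coe hr, EReal.coe_eq_zero] at hGP
  rw [Gam_eq_coe hr', EReal.coe_eq_zero] at hGP'
  rw [Gam_eq_coe hr, Gam_eq_coe hr', Ne, Ne, EReal.coe_eq_zero, EReal.coe_eq_zero] at hnot
  have hcross : E v' ≤ r + v' ρ := le_add_of_iInf_eq (hE v') hr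
  have hcross' : E v ≤ r' + v ρ' := le_add_of_iInf_eq (hE v) hr'
  rw [sub_apply, map_sub, map_sub]
  rcases hnot with h | h
  · linarith [lt_of_le_of_ne (sub_nonneg.2 hcross) (Ne.symm h)]
  · linarith [lt_of_le_of_ne (sub_nonneg.2 hcross') (Ne.symm h)]

/-- Strict monotonicity for ground pairs. -/
theorem strict_monotonicity
    {B : Type*} [NormedAddCommGroup B] [NormedSpace ℝ B]
    (F : B → EReal) (hFbot : ∀ σ : B, F σ ≠ ⊥)
    (E : (B →L[ℝ] ℝ) → ℝ)
    (hE : ∀ v : B →L[ℝ] ℝ, (⨅ σ : B, F σ + (v σ : EReal)) = (E v : EReal))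
    (v v' : B →L[ℝ] ℝ) (ρ ρ' : B)
    (hGP : Gam F E v ρ = 0) (hGP' : Gam F E v' ρ' = 0)
    (hnot : Gam F E v' ρ ≠ 0 ∨ Gam F E v ρ' ≠ 0) :
    (v - v') (ρ - ρ') < 0 :=
  strict_monotonicity_general F E hE v v' ρ ρ' hGP hGP' hnot
end

section
/- Characterization of ground pairs by the superdifferential of E: let ρ ∈ B satisfy the Fenchel–Moreau representation F(ρ) = sup_{w ∈ B'} (E(w) − ⟨w,ρ⟩), with the supremum finite. Then for every v ∈ B', (v,ρ) ∈ GP if and only if ρ is a supergradient of E at v, i.e. if and only if E(w) ≤ E(v) + ⟨w − v, ρ⟩ for all w ∈ B'. -/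
theorem iSup_eq_apply_iff {α ι : Type*} [CompleteLattice α] (f : ι → α) (i : ι) :
    ⨆ j, f j = f i ↔ ∀ j, f j ≤ f i := by
  rw [← iSup_le_iff, (le_iSup f i).ge_iff_eq']

theorem EReal.add_coe_sub_coe_eq_zero_iff (x : EReal) (a b : ℝ) :
    x + a - b = 0 ↔ x = (b - a : ℝ) := by
  induction x using EReal.rec with
  | bot => exact iff_of_false (by simp) (EReal.bot_ne_coe _)
  | top => exact iff_of_false (by simp) (EReal.top_ne_coe _)
  | coe x =>
    norm_cast
    constructor <;> intro h <;> linarith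

theorem Gam_eq_zero_iff {B : Type*} [NormedAddCommGroup B] [NormedSpace ℝ B]
    (F : B → EReal) (E : (B →L[ℝ] ℝ) → ℝ) (v : B →L[ℝ] ℝ) (ρ : B) :
    Gam F E v ρ = 0 ↔ F ρ = (E v - v ρ : ℝ) :=
  EReal.add_coe_sub_coe_eq_zero_iff _ _ _

theorem ground_pair_iff_supergradient_general
    {B : Type*} [NormedAddCommGroup B] [NormedSpace ℝ B]
    (F : B → EReal)
    (E : (B →L[ℝ] ℝ) → ℝ)
    (ρ : B)
    (hrep : F ρ = ⨆ w : B →L[ℝ] ℝ, ((E w - w ρ : ℝ) : EReal)) :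
    ∀ v : B →L[ℝ] ℝ,
      Gam F E v ρ = 0 ↔ ∀ w : B →L[ℝ] ℝ, E w ≤ E v + (w - v) ρ := by
  intro v
  rw [Gam_eq_zero_iff, hrep, iSup_eq_apply_iff (fun w ↦ ((E w - w ρ : ℝ) : EReal)) v]
  refine forall_congr' fun w ↦ ?_
  rw [EReal.coe_le_coe_iff, sub_apply]
  constructor <;> intro h <;> linarith

/-- Ground pairs are characterized by the superdifferential of `E`:
if `F(ρ) = sup_w (E(w) − ⟨w,ρ⟩)` with the supremum finite, then
`(v,ρ) ∈ GP ↔ ρ ∈ ∂̄E(v)`. -/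
theorem ground_pair_iff_supergradient
    {B : Type*} [NormedAddCommGroup B] [NormedSpace ℝ B]
    (F : B → EReal) (hFbot : ∀ σ : B, F σ ≠ ⊥)
    (E : (B →L[ℝ] ℝ) → ℝ)
    (hE : ∀ v : B →L[ℝ] ℝ, (⨅ σ : B, F σ + (v σ : EReal)) = (E v : EReal))
    (ρ : B)
    (hrep : F ρ = ⨆ w : B →L[ℝ] ℝ, ((E w - w ρ : ℝ) : EReal))
    (hfin : F ρ ≠ ⊤) :
    ∀ v : B →L[ℝ] ℝ,
      Gam F E v ρ = 0 ↔ ∀ w : B →L[ℝ] ℝ, E w ≤ E v + (w - v) ρ :=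
  ground_pair_iff_supergradient_general F E ρ hrep
end

section
/- Progress lemma, second form: under the interpolation setup, for 0 < λ ≤ 1, [Γ(v°,ρ_λ) − Γ(v°,ρ₀)] + Γ(v̂_λ, ρ₀) = (1−λ)⟨Δv₀, ρ_λ − ρ₀⟩ + ⟨DΦ(ρ₀) − DΦ(ρ_λ), ρ_λ − ρ₀⟩. -/
section ExcessEnergy

variable {B : Type*} [NormedAddCommGroup B] [NormedSpace ℝ B]
  {F : B → EReal} {E : (B →L[ℝ] ℝ) → ℝ}

theorem gam_eq_zero_iff {v : B →L[ℝ] ℝ} {ρ : B} :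
    Gam F E v ρ = 0 ↔ F ρ = ((E v - v ρ : ℝ) : EReal) := by
  unfold Gam
  induction F ρ using EReal.rec with
  | bot => simp only [EReal.bot_add, EReal.bot_sub, EReal.bot_ne_zero, EReal.bot_ne_coe]
  | top => simp only [EReal.top_add_coe, EReal.top_sub_coe, EReal.top_ne_zero, EReal.top_ne_coe]
  | coe a =>
    norm_cast
    constructor <;> intro h <;> linarith

theorem gam_sub_gam_add_gam {v w : B →L[ℝ] ℝ} {ρ σ : B}
    (hρ : Gam F E v ρ = 0) (hσ : Gam F E w σ = 0) (u : B →L[ℝ] ℝ) :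
    Gam F E u σ - Gam F E u ρ + Gam F E w ρ = (((u - w) (σ - ρ) : ℝ) : EReal) := by
  rw [gam_eq_zero_iff] at hρ hσ
  simp only [Gam, hρ, hσ]
  norm_cast
  simp only [sub_apply, map_sub]
  ring

end ExcessEnergy

theorem sub_eq_of_interpolation {M : Type*} [AddCommGroup M] [Module ℝ M]
    {vt v₀ d₀ dlam vhat₀ Δv₀ v₁ vlam vhatlam : M} {lam : ℝ}
    (hvhat₀ : vhat₀ = v₀ + d₀) (hΔv₀ : Δv₀ = vt - vhat₀) (hv₁ : v₁ = v₀ + Δv₀)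
    (hvlam : vlam = (1 - lam) • v₀ + lam • v₁) (hvhatlam : vhatlam = vlam + dlam) :
    vt - vhatlam = (1 - lam) • Δv₀ + (d₀ - dlam) := by
  subst_vars
  module

theorem progress_lemma_second_form_general
    {B : Type*} [NormedAddCommGroup B] [NormedSpace ℝ B]
    (F₀ : B → EReal)
    (Φ : B → ℝ) (DΦ : B → (B →L[ℝ] ℝ))
    (E : (B →L[ℝ] ℝ) → ℝ)
    -- interpolation setup
    (vt v₀ : B →L[ℝ] ℝ) (ρ₀ : B)
    (vhat₀ : B →L[ℝ] ℝ) (hvhat₀ : vhat₀ = v₀ + DΦ ρ₀)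
    (Δv₀ : B →L[ℝ] ℝ) (hΔv₀ : Δv₀ = vt - vhat₀)
    (v₁ : B →L[ℝ] ℝ) (hv₁ : v₁ = v₀ + Δv₀)
    (lam : ℝ)
    (vlam : B →L[ℝ] ℝ) (hvlam : vlam = (1 - lam) • v₀ + lam • v₁)
    (ρlam : B)
    (vhatlam : B →L[ℝ] ℝ) (hvhatlam : vhatlam = vlam + DΦ ρlam)
    (hGPhat₀ : Gam (fun σ => F₀ σ + (Φ σ : EReal)) E vhat₀ ρ₀ = 0)
    (hGPhatlam : Gam (fun σ => F₀ σ + (Φ σ : EReal)) E vhatlam ρlam = 0) :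
    (Gam (fun σ => F₀ σ + (Φ σ : EReal)) E vt ρlam
        - Gam (fun σ => F₀ σ + (Φ σ : EReal)) E vt ρ₀)
      + Gam (fun σ => F₀ σ + (Φ σ : EReal)) E vhatlam ρ₀
      = (((1 - lam) * (Δv₀ (ρlam - ρ₀))
          + (DΦ ρ₀ - DΦ ρlam) (ρlam - ρ₀) : ℝ) : EReal) := by
  rw [gam_sub_gam_add_gam hGPhat₀ hGPhatlam,
    sub_eq_of_interpolation hvhat₀ hΔv₀ hv₁ hvlam hvhatlam]
  simp only [add_apply, smul_apply, smul_eq_mul]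

/-- Progress lemma, second form:
`[Γ(v°,ρ_λ) − Γ(v°,ρ₀)] + Γ(v̂_λ, ρ₀)
  = (1−λ)⟨Δv₀, ρ_λ − ρ₀⟩ + ⟨DΦ(ρ₀) − DΦ(ρ_λ), ρ_λ − ρ₀⟩`. -/
theorem progress_lemma_second_form
    {B : Type*} [NormedAddCommGroup B] [NormedSpace ℝ B]
    (F₀ : B → EReal) (hFbot : ∀ σ : B, F₀ σ ≠ ⊥)
    (E₀ : (B →L[ℝ] ℝ) → ℝ)
    (hE₀ : ∀ v : B →L[ℝ] ℝ, (⨅ σ : B, F₀ σ + (v σ : EReal)) = (E₀ v : EReal))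
    (Φ : B → ℝ) (DΦ : B → (B →L[ℝ] ℝ))
    (hΦ : ∀ ρ σ : B, HasDerivAt (fun t : ℝ => Φ (ρ + t • σ)) (DΦ ρ σ) 0)
    (E : (B →L[ℝ] ℝ) → ℝ)
    (hE : ∀ v : B →L[ℝ] ℝ,
      (⨅ σ : B, (F₀ σ + (Φ σ : EReal)) + (v σ : EReal)) = (E v : EReal))
    -- interpolation setup
    (vt v₀ : B →L[ℝ] ℝ) (ρ₀ : B)
    (hGP₀ : Gam F₀ E₀ v₀ ρ₀ = 0)
    (vhat₀ : B →L[ℝ] ℝ) (hvhat₀ : vhat₀ = v₀ + DΦ ρ₀)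
    (Δv₀ : B →L[ℝ] ℝ) (hΔv₀ : Δv₀ = vt - vhat₀)
    (v₁ : B →L[ℝ] ℝ) (hv₁ : v₁ = v₀ + Δv₀)
    (lam : ℝ) (hlam : 0 < lam) (hlam1 : lam ≤ 1)
    (vlam : B →L[ℝ] ℝ) (hvlam : vlam = (1 - lam) • v₀ + lam • v₁)
    (ρlam : B) (hGP₀lam : Gam F₀ E₀ vlam ρlam = 0)
    (vhatlam : B →L[ℝ] ℝ) (hvhatlam : vhatlam = vlam + DΦ ρlam)
    (hGPhat₀ : Gam (fun σ => F₀ σ + (Φ σ : EReal)) E vhat₀ ρ₀ = 0)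
    (hGPhatlam : Gam (fun σ => F₀ σ + (Φ σ : EReal)) E vhatlam ρlam = 0) :
    (Gam (fun σ => F₀ σ + (Φ σ : EReal)) E vt ρlam
        - Gam (fun σ => F₀ σ + (Φ σ : EReal)) E vt ρ₀)
      + Gam (fun σ => F₀ σ + (Φ σ : EReal)) E vhatlam ρ₀
      = (((1 - lam) * (Δv₀ (ρlam - ρ₀))
          + (DΦ ρ₀ - DΦ ρlam) (ρlam - ρ₀) : ℝ) : EReal) :=
  progress_lemma_second_form_general F₀ Φ DΦ E vt v₀ ρ₀ vhat₀ hvhat₀ Δv₀ hΔv₀ v₁ hv₁ lam vlam hvlam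
    ρlam vhatlam hvhatlam hGPhat₀ hGPhatlam
end

section
/- Alternate expression for the leading term of the progress lemma: under the interpolation setup, for 0 < λ ≤ 1, ⟨Δv₀, ρ_λ − ρ₀⟩ = −λ^{-1}[Γ₀(v_λ, ρ₀) + Γ₀(v₀, ρ_λ)]; in particular ⟨Δv₀, ρ_λ − ρ₀⟩ ≤ 0. -/
lemma gam_nonneg {B : Type*} [NormedAddCommGroup B] [NormedSpace ℝ B]
    (F : B → EReal) (E : (B →L[ℝ] ℝ) → ℝ)
    (hE : ∀ v : B →L[ℝ] ℝ, (⨅ σ : B, F σ + (v σ : EReal)) = (E v : EReal))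
    (v : B →L[ℝ] ℝ) (ρ : B) : 0 ≤ Gam F E v ρ := by
  have h := iInf_le (fun σ : B => F σ + ((v σ : ℝ) : EReal)) ρ
  rw [hE] at h
  rw [Gam]
  refine (EReal.le_sub_iff_add_le (Or.inl ?_) (Or.inl ?_)).2 (by simpa using h)
  · exact EReal.coe_ne_bot _
  · exact EReal.coe_ne_top _

lemma gam_finite {B : Type*} [NormedAddCommGroup B] [NormedSpace ℝ B]
    (F : B → EReal) (E : (B →L[ℝ] ℝ) → ℝ)
    (v : B →L[ℝ] ℝ) (ρ : B) (hb : F ρ ≠ ⊥) (h : Gam F E v ρ = 0) :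
    ∃ r : ℝ, F ρ = (r : EReal) ∧ r + v ρ - E v = 0 := by
  have ht : F ρ ≠ ⊤ := by
    intro htop
    rw [Gam, htop] at h
    simp [EReal.top_add_coe, EReal.top_sub_coe] at h
  rw [Gam] at h
  lift F ρ to ℝ using ⟨ht, hb⟩ with r hr
  exact ⟨r, rfl, by exact_mod_cast h⟩

/-- Alternate expression for the leading term of the progress lemma:
`⟨Δv₀, ρ_λ − ρ₀⟩ = −λ⁻¹[Γ₀(v_λ, ρ₀) + Γ₀(v₀, ρ_λ)] ≤ 0`. -/
theorem progress_leading_term_alternate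
    {B : Type*} [NormedAddCommGroup B] [NormedSpace ℝ B]
    (F₀ : B → EReal) (hFbot : ∀ σ : B, F₀ σ ≠ ⊥)
    (E₀ : (B →L[ℝ] ℝ) → ℝ)
    (hE₀ : ∀ v : B →L[ℝ] ℝ, (⨅ σ : B, F₀ σ + (v σ : EReal)) = (E₀ v : EReal))
    (Φ : B → ℝ) (DΦ : B → (B →L[ℝ] ℝ))
    -- interpolation setup
    (vt v₀ : B →L[ℝ] ℝ) (ρ₀ : B)
    (hGP₀ : Gam F₀ E₀ v₀ ρ₀ = 0)
    (vhat₀ : B →L[ℝ] ℝ) (hvhat₀ : vhat₀ = v₀ + DΦ ρ₀)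
    (Δv₀ : B →L[ℝ] ℝ) (hΔv₀ : Δv₀ = vt - vhat₀)
    (v₁ : B →L[ℝ] ℝ) (hv₁ : v₁ = v₀ + Δv₀)
    (lam : ℝ) (hlam : 0 < lam) (hlam1 : lam ≤ 1)
    (vlam : B →L[ℝ] ℝ) (hvlam : vlam = (1 - lam) • v₀ + lam • v₁)
    (ρlam : B) (hGP₀lam : Gam F₀ E₀ vlam ρlam = 0) :
    ((Δv₀ (ρlam - ρ₀) : ℝ) : EReal)
        = -((lam⁻¹ : ℝ) : EReal) * (Gam F₀ E₀ vlam ρ₀ + Gam F₀ E₀ v₀ ρlam) ∧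
      Δv₀ (ρlam - ρ₀) ≤ 0 := by
  obtain ⟨r₀, hr₀, e₀⟩ := gam_finite F₀ E₀ v₀ ρ₀ (hFbot ρ₀) hGP₀
  obtain ⟨r₁, hr₁, e₁⟩ := gam_finite F₀ E₀ vlam ρlam (hFbot ρlam) hGP₀lam
  have hvlam' : ∀ σ : B, vlam σ = v₀ σ + lam * Δv₀ σ := by
    intro σ
    simp [hvlam, hv₁, ContinuousLinearMap.add_apply, ContinuousLinearMap.smul_apply]
    ring
  have hg0 : Gam F₀ E₀ vlam ρ₀ = ((r₀ + vlam ρ₀ - E₀ vlam : ℝ) : EReal) := by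
    rw [Gam, hr₀]; push_cast; rfl
  have hg1 : Gam F₀ E₀ v₀ ρlam = ((r₁ + v₀ ρlam - E₀ v₀ : ℝ) : EReal) := by
    rw [Gam, hr₁]; push_cast; rfl
  have hn0 : (0:ℝ) ≤ r₀ + vlam ρ₀ - E₀ vlam := by
    have := gam_nonneg F₀ E₀ hE₀ vlam ρ₀
    rw [hg0] at this
    exact_mod_cast this
  have hn1 : (0:ℝ) ≤ r₁ + v₀ ρlam - E₀ v₀ := by
    have := gam_nonneg F₀ E₀ hE₀ v₀ ρlam
    rw [hg1] at this
    exact_mod_cast this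
  have hρ0 : vlam ρ₀ = v₀ ρ₀ + lam * Δv₀ ρ₀ := hvlam' ρ₀
  have hρ1 : vlam ρlam = v₀ ρlam + lam * Δv₀ ρlam := hvlam' ρlam
  have hsub : Δv₀ (ρlam - ρ₀) = Δv₀ ρlam - Δv₀ ρ₀ := by
    rw [map_sub]
  have hsum : (r₀ + vlam ρ₀ - E₀ vlam) + (r₁ + v₀ ρlam - E₀ v₀)
      = lam * (Δv₀ ρ₀ - Δv₀ ρlam) := by
    rw [hρ1] at e₁
    rw [hρ0]
    linear_combination e₀ + e₁
  have hreal : Δv₀ (ρlam - ρ₀)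
      = -(lam⁻¹) * ((r₀ + vlam ρ₀ - E₀ vlam) + (r₁ + v₀ ρlam - E₀ v₀)) := by
    rw [hsub, hsum]
    field_simp
    ring
  constructor
  · rw [hg0, hg1, hreal]
    push_cast
    rfl
  · rw [hsub] at hreal ⊢
    rw [hreal]
    have hS : 0 ≤ (r₀ + vlam ρ₀ - E₀ vlam) + (r₁ + v₀ ρlam - E₀ v₀) := by linarith
    have := mul_nonneg (inv_pos.mpr hlam).le hS
    linarith
end

section
/- Feasible progress lemma: under the interpolation setup, assume in addition that (i) DΦ is norm-to-norm continuous at ρ₀, (ii) ‖ρ_λ − ρ₀‖ → 0 as λ → 0⁺, and (iii) there exist c > 0 and δ > 0 such that |⟨Δv₀, ρ_λ − ρ₀⟩| > c‖ρ_λ − ρ₀‖ for all λ ∈ (0,δ). Then there exists λ₀ > 0 such that Γ(v°, ρ_λ) < Γ(v°, ρ₀) for all λ ∈ (0, λ₀). -/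
open scoped Topology

/-!
Comparing the ground pairs `(v₀, ρ₀)` and `(v_λ, ρ_λ)` of `F₀` gives the monotonicity
`λ ⟨Δv₀, ρ_λ − ρ₀⟩ ≤ 0`, so by (iii) `⟨Δv₀, ρ_λ − ρ₀⟩ < −c‖ρ_λ − ρ₀‖`. Since `ρ_λ` minimises
`F + v̂_λ`, the excess energy at `v°` drops by at least `−⟨v° − v̂_λ, ρ_λ − ρ₀⟩`, and
`v° − v̂_λ = (1 − λ) Δv₀ + (DΦ(ρ₀) − DΦ(ρ_λ))`. By (i) and (ii) the second term has norm below
`c/2` for small `λ`, so for `λ ≤ 1/2` the first term wins and the excess energy strictly decreases.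
-/

section ExcessEnergy

variable {B : Type*} [NormedAddCommGroup B] [NormedSpace ℝ B]
  {F : B → EReal} {E : (B →L[ℝ] ℝ) → ℝ} {u v w : B →L[ℝ] ℝ} {ρ σ : B}

lemma gam_eq_coe_of_eq_coe {a : ℝ} (h : F ρ = a) :
    Gam F E v ρ = ((a + v ρ - E v : ℝ) : EReal) := by
  rw [Gam, h]
  norm_cast

lemma eq_coe_of_gam_eq_zero (h : Gam F E v ρ = 0) : F ρ = ((E v - v ρ : ℝ) : EReal) := by
  rw [Gam] at h
  generalize F ρ = x at h ⊢
  induction x using EReal.rec with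
  | bot => simp at h
  | top => simp at h
  | coe a =>
    norm_cast at h ⊢
    linarith

variable (hE : ∀ v : B →L[ℝ] ℝ, (⨅ σ : B, F σ + (v σ : EReal)) = (E v : EReal))
include hE

lemma coe_le_add_of_iInf_eq (v : B →L[ℝ] ℝ) (σ : B) : (E v : EReal) ≤ F σ + v σ :=
  hE v ▸ iInf_le _ σ

lemma ne_bot_of_iInf_eq (σ : B) : F σ ≠ ⊥ := by
  intro h
  simpa [h] using coe_le_add_of_iInf_eq hE 0 σ

lemma le_add_of_iInf_eq_s12 {b : ℝ} (hσ : F σ = b) (v : B →L[ℝ] ℝ) : E v ≤ b + v σ := by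
  exact_mod_cast hσ ▸ coe_le_add_of_iInf_eq hE v σ

lemma apply_sub_nonpos_of_gam_eq_zero (hρ : Gam F E v ρ = 0) (hσ : Gam F E w σ = 0) :
    (w - v) (σ - ρ) ≤ 0 := by
  have hv := le_add_of_iInf_eq_s12 hE (eq_coe_of_gam_eq_zero hσ) v
  have hw := le_add_of_iInf_eq_s12 hE (eq_coe_of_gam_eq_zero hρ) w
  simp only [sub_apply, map_sub]
  linarith

lemma gam_lt_gam_of_gam_eq_zero (hσ : Gam F E w σ = 0) (hρ : F ρ ≠ ⊤)
    (h : (u - w) (σ - ρ) < 0) : Gam F E u σ < Gam F E u ρ := by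
  have hρ' : F ρ = (F ρ).toReal := (EReal.coe_toReal hρ (ne_bot_of_iInf_eq hE ρ)).symm
  rw [gam_eq_coe_of_eq_coe (eq_coe_of_gam_eq_zero hσ), gam_eq_coe_of_eq_coe hρ',
    EReal.coe_lt_coe_iff]
  have hw := le_add_of_iInf_eq_s12 hE hρ' w
  simp only [sub_apply, map_sub] at h
  linarith

end ExcessEnergy

lemma smul_add_apply_neg {B : Type*} [NormedAddCommGroup B] [NormedSpace ℝ B]
    {A D : B →L[ℝ] ℝ} {d : B} {c s : ℝ} (hA : c * ‖d‖ < -A d) (hD : ‖D‖ ≤ c / 2)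
    (hs : 1 / 2 ≤ s) : (s • A + D) d < 0 := by
  have hDd : D d ≤ c / 2 * ‖d‖ :=
    (le_abs_self _).trans ((D.le_opNorm d).trans (by gcongr))
  have hc : 0 ≤ c * ‖d‖ := mul_nonneg (by linarith [norm_nonneg D]) (norm_nonneg d)
  simp only [add_apply, smul_apply, smul_eq_mul]
  nlinarith

theorem feasible_progress_general
    {B : Type*} [NormedAddCommGroup B] [NormedSpace ℝ B]
    (F₀ : B → EReal)
    (E₀ : (B →L[ℝ] ℝ) → ℝ)
    (hE₀ : ∀ v : B →L[ℝ] ℝ, (⨅ σ : B, F₀ σ + (v σ : EReal)) = (E₀ v : EReal))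
    (Φ : B → ℝ) (DΦ : B → (B →L[ℝ] ℝ))
    (E : (B →L[ℝ] ℝ) → ℝ)
    (hE : ∀ v : B →L[ℝ] ℝ,
      (⨅ σ : B, (F₀ σ + (Φ σ : EReal)) + (v σ : EReal)) = (E v : EReal))
    -- interpolation setup
    (vt v₀ : B →L[ℝ] ℝ) (ρ₀ : B)
    (hGP₀ : Gam F₀ E₀ v₀ ρ₀ = 0)
    (vhat₀ : B →L[ℝ] ℝ) (hvhat₀ : vhat₀ = v₀ + DΦ ρ₀)
    (Δv₀ : B →L[ℝ] ℝ) (hΔv₀ : Δv₀ = vt - vhat₀)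
    (v₁ : B →L[ℝ] ℝ) (hv₁ : v₁ = v₀ + Δv₀)
    (vlam : ℝ → (B →L[ℝ] ℝ)) (hvlam : ∀ lam : ℝ, vlam lam = (1 - lam) • v₀ + lam • v₁)
    (ρlam : ℝ → B)
    (hGP₀lam : ∀ lam ∈ Set.Ioc (0 : ℝ) 1, Gam F₀ E₀ (vlam lam) (ρlam lam) = 0)
    (hGPhatlam : ∀ lam ∈ Set.Ioc (0 : ℝ) 1,
      Gam (fun σ => F₀ σ + (Φ σ : EReal)) E (vlam lam + DΦ (ρlam lam)) (ρlam lam) = 0)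
    -- (i) norm-to-norm continuity of DΦ at ρ₀
    (hDΦcont : ContinuousAt DΦ ρ₀)
    -- (ii) ‖ρ_λ − ρ₀‖ → 0 as λ → 0⁺
    (hρconv : Filter.Tendsto (fun lam => ‖ρlam lam - ρ₀‖) (𝓝[>] (0 : ℝ)) (𝓝 0))
    -- (iii) |⟨Δv₀, ρ_λ − ρ₀⟩| > c‖ρ_λ − ρ₀‖ for λ ∈ (0,δ)
    (hlower : ∃ c > (0 : ℝ), ∃ δ > (0 : ℝ), ∀ lam ∈ Set.Ioo (0 : ℝ) δ,
      c * ‖ρlam lam - ρ₀‖ < |Δv₀ (ρlam lam - ρ₀)|) :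
    ∃ lam₀ > (0 : ℝ), ∀ lam ∈ Set.Ioo (0 : ℝ) lam₀,
      Gam (fun σ => F₀ σ + (Φ σ : EReal)) E vt (ρlam lam)
        < Gam (fun σ => F₀ σ + (Φ σ : EReal)) E vt ρ₀ := by
  obtain ⟨c, hc, δ, hδ, hlow⟩ := hlower
  have hDΦ : ∀ᶠ lam in 𝓝[>] (0 : ℝ), ‖DΦ ρ₀ - DΦ (ρlam lam)‖ < c / 2 := by
    have hρ := tendsto_iff_norm_sub_tendsto_zero.mpr hρconv
    simpa [dist_eq_norm'] using
      (hDΦcont.tendsto.comp hρ).eventually (Metric.ball_mem_nhds _ (half_pos hc))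
  have hFρ₀ : F₀ ρ₀ + (Φ ρ₀ : EReal) ≠ ⊤ := by
    rw [eq_coe_of_gam_eq_zero hGP₀]
    exact EReal.coe_add _ _ ▸ EReal.coe_ne_top _
  refine (nhdsGT_basis 0).eventually_iff.mp ?_
  filter_upwards [hDΦ, Ioo_mem_nhdsGT (lt_min hδ one_half_pos)] with lam hlamDΦ ⟨hlam0, hlam⟩
  have hlam1 : lam ∈ Set.Ioc (0 : ℝ) 1 := ⟨hlam0, by linarith [min_le_right δ (1 / 2)]⟩
  have hmono : lam * Δv₀ (ρlam lam - ρ₀) ≤ 0 := by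
    have hvl : vlam lam - v₀ = lam • Δv₀ := by rw [hvlam, hv₁]; module
    simpa [hvl] using apply_sub_nonpos_of_gam_eq_zero hE₀ hGP₀ (hGP₀lam lam hlam1)
  have hΔ : c * ‖ρlam lam - ρ₀‖ < -Δv₀ (ρlam lam - ρ₀) := by
    have h := hlow lam ⟨hlam0, hlam.trans_le (min_le_left _ _)⟩
    rwa [abs_of_nonpos (nonpos_of_mul_nonpos_right hmono hlam0)] at h
  have hsplit :
      vt - (vlam lam + DΦ (ρlam lam)) = (1 - lam) • Δv₀ + (DΦ ρ₀ - DΦ (ρlam lam)) := by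
    rw [hvlam, hv₁, hΔv₀, hvhat₀]; module
  refine gam_lt_gam_of_gam_eq_zero hE (hGPhatlam lam hlam1) hFρ₀ ?_
  rw [hsplit]
  exact smul_add_apply_neg hΔ hlamDΦ.le (by linarith [min_le_right δ (1 / 2)])

/-- Feasible progress lemma: under the interpolation setup, if `DΦ` is norm-continuous
at `ρ₀`, `‖ρ_λ − ρ₀‖ → 0` as `λ → 0⁺`, and `|⟨Δv₀, ρ_λ − ρ₀⟩| > c‖ρ_λ − ρ₀‖` near `0⁺`,
then `Γ(v°,ρ_λ) < Γ(v°,ρ₀)` for all sufficiently small `λ > 0`. -/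
theorem feasible_progress
    {B : Type*} [NormedAddCommGroup B] [NormedSpace ℝ B]
    (F₀ : B → EReal) (hFbot : ∀ σ : B, F₀ σ ≠ ⊥)
    (E₀ : (B →L[ℝ] ℝ) → ℝ)
    (hE₀ : ∀ v : B →L[ℝ] ℝ, (⨅ σ : B, F₀ σ + (v σ : EReal)) = (E₀ v : EReal))
    (Φ : B → ℝ) (DΦ : B → (B →L[ℝ] ℝ))
    (hΦ : ∀ ρ σ : B, HasDerivAt (fun t : ℝ => Φ (ρ + t • σ)) (DΦ ρ σ) 0)
    (E : (B →L[ℝ] ℝ) → ℝ)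
    (hE : ∀ v : B →L[ℝ] ℝ,
      (⨅ σ : B, (F₀ σ + (Φ σ : EReal)) + (v σ : EReal)) = (E v : EReal))
    -- interpolation setup
    (vt v₀ : B →L[ℝ] ℝ) (ρ₀ : B)
    (hGP₀ : Gam F₀ E₀ v₀ ρ₀ = 0)
    (vhat₀ : B →L[ℝ] ℝ) (hvhat₀ : vhat₀ = v₀ + DΦ ρ₀)
    (Δv₀ : B →L[ℝ] ℝ) (hΔv₀ : Δv₀ = vt - vhat₀)
    (v₁ : B →L[ℝ] ℝ) (hv₁ : v₁ = v₀ + Δv₀)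
    (vlam : ℝ → (B →L[ℝ] ℝ)) (hvlam : ∀ lam : ℝ, vlam lam = (1 - lam) • v₀ + lam • v₁)
    (ρlam : ℝ → B)
    (hGP₀lam : ∀ lam ∈ Set.Ioc (0 : ℝ) 1, Gam F₀ E₀ (vlam lam) (ρlam lam) = 0)
    (hGPhat₀ : Gam (fun σ => F₀ σ + (Φ σ : EReal)) E vhat₀ ρ₀ = 0)
    (hGPhatlam : ∀ lam ∈ Set.Ioc (0 : ℝ) 1,
      Gam (fun σ => F₀ σ + (Φ σ : EReal)) E (vlam lam + DΦ (ρlam lam)) (ρlam lam) = 0)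
    -- (i) norm-to-norm continuity of DΦ at ρ₀
    (hDΦcont : ContinuousAt DΦ ρ₀)
    -- (ii) ‖ρ_λ − ρ₀‖ → 0 as λ → 0⁺
    (hρconv : Filter.Tendsto (fun lam => ‖ρlam lam - ρ₀‖) (𝓝[>] (0 : ℝ)) (𝓝 0))
    -- (iii) |⟨Δv₀, ρ_λ − ρ₀⟩| > c‖ρ_λ − ρ₀‖ for λ ∈ (0,δ)
    (hlower : ∃ c > (0 : ℝ), ∃ δ > (0 : ℝ), ∀ lam ∈ Set.Ioo (0 : ℝ) δ,
      c * ‖ρlam lam - ρ₀‖ < |Δv₀ (ρlam lam - ρ₀)|) :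
    ∃ lam₀ > (0 : ℝ), ∀ lam ∈ Set.Ioo (0 : ℝ) lam₀,
      Gam (fun σ => F₀ σ + (Φ σ : EReal)) E vt (ρlam lam)
        < Gam (fun σ => F₀ σ + (Φ σ : EReal)) E vt ρ₀ :=
  feasible_progress_general F₀ E₀ hE₀ Φ DΦ E hE vt v₀ ρ₀ hGP₀ vhat₀ hvhat₀ Δv₀ hΔv₀ v₁ hv₁ vlam
    hvlam ρlam hGP₀lam hGPhatlam hDΦcont hρconv hlower
end

section
/- Equivalence of the two progress conditions: under the interpolation setup, assume Δv₀ ≠ 0 and ρ_λ ≠ ρ₀ for all λ ∈ (0,1]. Then liminf_{λ→0⁺} |⟨v_λ − v₀, ρ_λ − ρ₀⟩| / (‖v_λ − v₀‖ · ‖ρ_λ − ρ₀‖) > 0 holds if and only if there exist c > 0 and δ > 0 such that Γ₀(v_λ, ρ₀) + Γ₀(v₀, ρ_λ) > c λ ‖ρ_λ − ρ₀‖ for all λ ∈ (0,δ). -/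
open scoped Topology

set_option maxHeartbeats 1000000 in
/-- Equivalence of the two progress conditions:
`liminf_{λ→0⁺} |⟨v_λ − v₀, ρ_λ − ρ₀⟩| / (‖v_λ − v₀‖‖ρ_λ − ρ₀‖) > 0` iff
`Γ₀(v_λ,ρ₀) + Γ₀(v₀,ρ_λ) > cλ‖ρ_λ − ρ₀‖` for some `c > 0` and all small `λ > 0`. -/
theorem progress_conditions_equivalent
    {B : Type*} [NormedAddCommGroup B] [NormedSpace ℝ B]
    (F₀ : B → EReal) (hFbot : ∀ σ : B, F₀ σ ≠ ⊥)
    (E₀ : (B →L[ℝ] ℝ) → ℝ)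
    (hE₀ : ∀ v : B →L[ℝ] ℝ, (⨅ σ : B, F₀ σ + (v σ : EReal)) = (E₀ v : EReal))
    (Φ : B → ℝ) (DΦ : B → (B →L[ℝ] ℝ))
    -- interpolation setup
    (vt v₀ : B →L[ℝ] ℝ) (ρ₀ : B)
    (hGP₀ : Gam F₀ E₀ v₀ ρ₀ = 0)
    (vhat₀ : B →L[ℝ] ℝ) (hvhat₀ : vhat₀ = v₀ + DΦ ρ₀)
    (Δv₀ : B →L[ℝ] ℝ) (hΔv₀ : Δv₀ = vt - vhat₀)
    (v₁ : B →L[ℝ] ℝ) (hv₁ : v₁ = v₀ + Δv₀)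
    (vlam : ℝ → (B →L[ℝ] ℝ)) (hvlam : ∀ lam : ℝ, vlam lam = (1 - lam) • v₀ + lam • v₁)
    (ρlam : ℝ → B)
    (hGP₀lam : ∀ lam ∈ Set.Ioc (0 : ℝ) 1, Gam F₀ E₀ (vlam lam) (ρlam lam) = 0)
    (hΔvne : Δv₀ ≠ 0)
    (hρne : ∀ lam ∈ Set.Ioc (0 : ℝ) 1, ρlam lam ≠ ρ₀) :
    (0 < Filter.liminf
        (fun lam => |(vlam lam - v₀) (ρlam lam - ρ₀)|
          / (‖vlam lam - v₀‖ * ‖ρlam lam - ρ₀‖)) (𝓝[>] (0 : ℝ)))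
      ↔ ∃ c > (0 : ℝ), ∃ δ > (0 : ℝ), ∀ lam ∈ Set.Ioo (0 : ℝ) δ,
          ((c * lam * ‖ρlam lam - ρ₀‖ : ℝ) : EReal)
            < Gam F₀ E₀ (vlam lam) ρ₀ + Gam F₀ E₀ v₀ (ρlam lam) := by
  classical
  set f : ℝ → ℝ := fun lam => |(vlam lam - v₀) (ρlam lam - ρ₀)|
          / (‖vlam lam - v₀‖ * ‖ρlam lam - ρ₀‖) with hfdef
  have hΔnorm : (0:ℝ) < ‖Δv₀‖ := norm_pos_iff.mpr hΔvne
  have hdiff : ∀ lam : ℝ, vlam lam - v₀ = lam • Δv₀ := by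
    intro lam
    ext x
    simp [hvlam, hv₁]
    ring
  -- finiteness of F₀ at ground pairs
  have key : ∀ (v : B →L[ℝ] ℝ) (ρ : B), Gam F₀ E₀ v ρ = 0 →
      F₀ ρ = ((E₀ v - v ρ : ℝ) : EReal) := by
    intro v ρ h
    unfold Gam at h
    have htop : F₀ ρ ≠ ⊤ := by
      intro htop
      rw [htop, EReal.top_add_coe, EReal.top_sub_coe] at h
      exact absurd h (by simp)
    have hcoe := EReal.coe_toReal htop (hFbot ρ)
    rw [← hcoe] at h ⊢
    rw [← EReal.coe_add, ← EReal.coe_sub, EReal.coe_eq_zero] at h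
    rw [EReal.coe_eq_coe_iff]
    linarith
  -- Γ is nonnegative
  have hGamnn : ∀ (v : B →L[ℝ] ℝ) (ρ : B), 0 ≤ Gam F₀ E₀ v ρ := by
    intro v ρ
    have hle : ((E₀ v : ℝ) : EReal) ≤ F₀ ρ + (v ρ : EReal) := by
      rw [← hE₀ v]; exact iInf_le _ ρ
    unfold Gam
    rw [EReal.le_sub_iff_add_le (Or.inl (EReal.coe_ne_bot _)) (Or.inl (EReal.coe_ne_top _)),
      zero_add]
    exact hle
  -- key identity for the sum of excess energies
  have hsum : ∀ lam ∈ Set.Ioc (0:ℝ) 1,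
      Gam F₀ E₀ (vlam lam) ρ₀ + Gam F₀ E₀ v₀ (ρlam lam)
        = ((lam * -(Δv₀ (ρlam lam - ρ₀)) : ℝ) : EReal) := by
    intro lam hlam
    have h1 := key v₀ ρ₀ hGP₀
    have h2 := key (vlam lam) (ρlam lam) (hGP₀lam lam hlam)
    have hv : vlam lam = v₀ + lam • Δv₀ := by
      have := hdiff lam; rw [← this]; abel
    unfold Gam
    rw [h1, h2, ← EReal.coe_add, ← EReal.coe_sub, ← EReal.coe_add, ← EReal.coe_sub,
      ← EReal.coe_add, EReal.coe_eq_coe_iff]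
    simp [hv, map_sub]
    ring
  -- hence the pairing is nonpositive
  have hneg : ∀ lam ∈ Set.Ioc (0:ℝ) 1, Δv₀ (ρlam lam - ρ₀) ≤ 0 := by
    intro lam hlam
    have h0 : (0:EReal) ≤ Gam F₀ E₀ (vlam lam) ρ₀ + Gam F₀ E₀ v₀ (ρlam lam) :=
      add_nonneg (hGamnn _ _) (hGamnn _ _)
    rw [hsum lam hlam, EReal.coe_nonneg] at h0
    nlinarith [hlam.1]
  have hsum' : ∀ lam ∈ Set.Ioc (0:ℝ) 1,
      Gam F₀ E₀ (vlam lam) ρ₀ + Gam F₀ E₀ v₀ (ρlam lam)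
        = ((lam * |Δv₀ (ρlam lam - ρ₀)| : ℝ) : EReal) := by
    intro lam hlam
    rw [hsum lam hlam, abs_of_nonpos (hneg lam hlam)]
  -- simplification of the ratio
  have hf : ∀ lam ∈ Set.Ioc (0:ℝ) 1,
      f lam = |Δv₀ (ρlam lam - ρ₀)| / (‖Δv₀‖ * ‖ρlam lam - ρ₀‖) := by
    intro lam hlam
    have h1 : |(vlam lam - v₀) (ρlam lam - ρ₀)| = lam * |Δv₀ (ρlam lam - ρ₀)| := by
      rw [hdiff lam]
      simp [abs_mul, abs_of_pos hlam.1]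
    have h2 : ‖vlam lam - v₀‖ = lam * ‖Δv₀‖ := by
      rw [hdiff lam]
      rw [norm_smul lam Δv₀, Real.norm_eq_abs, abs_of_pos hlam.1]
    rw [hfdef]
    simp only [h1, h2, mul_assoc]
    exact mul_div_mul_left _ _ (ne_of_gt hlam.1)
  -- bounds on f
  have hlb : ∀ lam, 0 ≤ f lam := by
    intro lam; rw [hfdef]; positivity
  have hub : ∀ lam, f lam ≤ 1 := by
    intro lam
    apply div_le_one_of_le₀ _ (by positivity)
    calc |(vlam lam - v₀) (ρlam lam - ρ₀)| = ‖(vlam lam - v₀) (ρlam lam - ρ₀)‖ :=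
          (Real.norm_eq_abs _).symm
      _ ≤ ‖vlam lam - v₀‖ * ‖ρlam lam - ρ₀‖ := (vlam lam - v₀).le_opNorm _
  have hbdd_ge : Filter.IsBoundedUnder (· ≥ ·) (𝓝[>] (0:ℝ)) f :=
    Filter.isBoundedUnder_of ⟨0, fun x => hlb x⟩
  have hbdd_le : Filter.IsBoundedUnder (· ≤ ·) (𝓝[>] (0:ℝ)) f :=
    Filter.isBoundedUnder_of ⟨1, fun x => hub x⟩
  have hcobdd : Filter.IsCoboundedUnder (· ≥ ·) (𝓝[>] (0:ℝ)) f :=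
    hbdd_le.isCoboundedUnder_ge
  constructor
  · intro hL
    set L := Filter.liminf f (𝓝[>] (0:ℝ)) with hLdef
    have hev : ∀ᶠ lam in 𝓝[>] (0:ℝ), L / 2 < f lam :=
      Filter.eventually_lt_of_lt_liminf (by linarith) hbdd_ge
    rw [Filter.eventually_iff, mem_nhdsGT_iff_exists_Ioo_subset] at hev
    obtain ⟨u, hu, hsub⟩ := hev
    refine ⟨L / 2 * ‖Δv₀‖, by positivity, min u 1, lt_min hu one_pos, ?_⟩
    intro lam hlam
    have hlam' : lam ∈ Set.Ioc (0:ℝ) 1 :=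
      ⟨hlam.1, le_of_lt (lt_of_lt_of_le hlam.2 (min_le_right _ _))⟩
    have hmem : lam ∈ Set.Ioo (0:ℝ) u :=
      ⟨hlam.1, lt_of_lt_of_le hlam.2 (min_le_left _ _)⟩
    have hflam : L / 2 < f lam := hsub hmem
    rw [hf lam hlam'] at hflam
    have hdpos : (0:ℝ) < ‖ρlam lam - ρ₀‖ :=
      norm_pos_iff.mpr (sub_ne_zero.mpr (hρne lam hlam'))
    rw [hsum' lam hlam', EReal.coe_lt_coe_iff]
    rw [lt_div_iff₀ (by positivity)] at hflam
    nlinarith [hlam.1]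
  · rintro ⟨c, hc, δ, hδ, h⟩
    have hev : ∀ᶠ lam in 𝓝[>] (0:ℝ), c / ‖Δv₀‖ ≤ f lam := by
      refine Filter.eventually_of_mem
        (Ioo_mem_nhdsGT_of_mem ⟨le_refl (0:ℝ), lt_min hδ one_pos⟩) ?_
      intro lam hlam
      have hlam' : lam ∈ Set.Ioc (0:ℝ) 1 :=
        ⟨hlam.1, le_of_lt (lt_of_lt_of_le hlam.2 (min_le_right _ _))⟩
      have hmem : lam ∈ Set.Ioo (0:ℝ) δ :=
        ⟨hlam.1, lt_of_lt_of_le hlam.2 (min_le_left _ _)⟩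
      have hh := h lam hmem
      rw [hsum' lam hlam', EReal.coe_lt_coe_iff] at hh
      have hdpos : (0:ℝ) < ‖ρlam lam - ρ₀‖ :=
        norm_pos_iff.mpr (sub_ne_zero.mpr (hρne lam hlam'))
      rw [hf lam hlam']
      rw [div_le_div_iff₀ hΔnorm (by positivity)]
      nlinarith [hlam.1]
    have := Filter.le_liminf_of_le hcobdd hev
    have hpos : (0:ℝ) < c / ‖Δv₀‖ := by positivity
    exact lt_of_lt_of_le hpos this
end
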